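/- In the soft one-round algorithm sr_τ, the following loop invariant holds in the limit τ → 0⁺: after the i-th iteration, the maintained availability vector c satisfies c_j = 1 if good j is in C_{i+1} (still available after agents 1..i picked exactly) and c_j = 0 otherwise, provided n ≤ m and no row of V has ties. -/

import Mathlib

open Finset

/-- Tie-breaking argmax: the smallest index in `C` attaining the maximum of `v` on `C`. -/
noncomputable def pickTB (v : ℕ → ℝ) (C : Finset ℕ) : ℕ :=
  if h : (C.filter fun j => ∀ j' ∈ C, v j' ≤ v j).Nonempty
  then (C.filter fun j => ∀ j' ∈ C, v j' ≤ v j).min' h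
  else 0

/-- softmax over goods `0, ..., m-1`. -/
noncomputable def softmaxOn (m : ℕ) (z : ℕ → ℝ) (j : ℕ) : ℝ :=
  Real.exp (z j) / ∑ j' ∈ Finset.range m, Real.exp (z j')

/-- minimum entry of a row over goods `0, ..., m-1`. -/
noncomputable def rowMin (m : ℕ) (vi : ℕ → ℝ) : ℝ :=
  if h : (Finset.range m).Nonempty then (Finset.range m).inf' h vi else 0

/-- State of the soft one-round algorithm `sr_τ` after `i` iterations:
`(y^{(i)}, c^{(i)})`, where `c^{(0)} = 1`, and at iteration `i+1` (agent `i`, 0-indexed)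
`y = softmax(((V[i] − min(V[i])·1 + 1) ⊙ c)/τ)` and `c ← (1 − y) ⊙ c`. -/
noncomputable def srState (τ : ℝ) (v : ℕ → ℕ → ℝ) (m : ℕ) : ℕ → (ℕ → ℝ) × (ℕ → ℝ)
  | 0 => (fun _ => 0, fun _ => 1)
  | i + 1 =>
    let c := (srState τ v m i).2
    let y := softmaxOn m fun j => (v i j - rowMin m (v i) + 1) * c j / τ
    (y, fun j => (1 - y j) * c j)

/-- Row `i` (0-indexed) of the output matrix `R` of the soft one-round algorithm. -/
noncomputable def srOut (τ : ℝ) (v : ℕ → ℕ → ℝ) (m : ℕ) (i : ℕ) : ℕ → ℝ :=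
  (srState τ v m (i + 1)).1

/-- Remaining goods `C_i` in the exact one-round procedure (0-indexed: `C 0 = [m]`). -/
noncomputable def oneRoundC (v : ℕ → ℕ → ℝ) (m : ℕ) : ℕ → Finset ℕ
  | 0 => Finset.range m
  | i + 1 => (oneRoundC v m i).erase (pickTB (v i) (oneRoundC v m i))

/-- Output matrix of the exact one-round procedure: `r(V)_{ij} = 1` iff agent `i`
picks good `j` (the maximizer of `v i` over `C_i`). -/
noncomputable def oneRoundMat (v : ℕ → ℕ → ℝ) (m : ℕ) (i j : ℕ) : ℝ :=
  if j = pickTB (v i) (oneRoundC v m i) then 1 else 0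

open Filter Topology

lemma pickTB_spec (v : ℕ → ℝ) (C : Finset ℕ) (h : C.Nonempty) :
    pickTB v C ∈ C ∧ ∀ j ∈ C, v j ≤ v (pickTB v C) := by
  obtain ⟨b, hb, hmax⟩ := C.exists_max_image v h
  have hne : (C.filter fun j => ∀ j' ∈ C, v j' ≤ v j).Nonempty :=
    ⟨b, Finset.mem_filter.2 ⟨hb, hmax⟩⟩
  have hmem := Finset.min'_mem _ hne
  rw [Finset.mem_filter] at hmem
  rw [pickTB, dif_pos hne]
  exact hmem

lemma oneRoundC_subset (v : ℕ → ℕ → ℝ) (m : ℕ) (i : ℕ) :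
    oneRoundC v m i ⊆ Finset.range m := by
  induction i with
  | zero => exact subset_rfl
  | succ i ih => exact (Finset.erase_subset _ _).trans ih

lemma oneRoundC_card (v : ℕ → ℕ → ℝ) (m : ℕ) (i : ℕ) (hi : i ≤ m) :
    (oneRoundC v m i).card = m - i := by
  induction i with
  | zero => simp [oneRoundC]
  | succ i ih =>
    have hi' : i ≤ m := Nat.le_of_succ_le hi
    have hcard := ih hi'
    have hne : (oneRoundC v m i).Nonempty := by
      rw [← Finset.card_pos, hcard]; omega
    have hp := (pickTB_spec (v i) _ hne).1
    show ((oneRoundC v m i).erase _).card = m - (i + 1)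
    rw [Finset.card_erase_of_mem hp, hcard]; omega

/-- rewrite of softmax as inverse of a sum of exponentials of differences -/
lemma softmaxOn_eq_inv (m : ℕ) (w : ℕ → ℝ) (k : ℕ) :
    softmaxOn m w k = (∑ k' ∈ Finset.range m, Real.exp (w k' - w k))⁻¹ := by
  rw [softmaxOn]
  simp only [Real.exp_sub]
  rw [← Finset.sum_div, inv_div]

/-- loop invariant: in the limit `τ → 0⁺`, after `i` iterations of `sr_τ`
the availability vector `c` is the indicator of the set of goods still available after
agents `1, ..., i` picked exactly (`C_{i+1}`, here 0-indexed `oneRoundC v m i`). -/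
theorem srState_c_tendsto_indicator (n m : ℕ) (v : ℕ → ℕ → ℝ)
    (hn : 0 < n) (hnm : n ≤ m)
    (hties : ∀ i, i < n → ∀ j, j < m → ∀ j', j' < m → j ≠ j' → v i j ≠ v i j')
    (i : ℕ) (hi : i ≤ n) (j : ℕ) (hj : j < m) :
    Tendsto (fun τ : ℝ => (srState τ v m i).2 j)
      (nhdsWithin 0 (Set.Ioi 0))
      (nhds (if j ∈ oneRoundC v m i then (1 : ℝ) else 0)) := by
  induction i generalizing j with
  | zero =>
    simp only [srState, oneRoundC, Finset.mem_range, hj, if_true]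
    exact tendsto_const_nhds
  | succ i ih =>
    have hi' : i ≤ n := Nat.le_of_succ_le hi
    have hin : i < n := hi
    set C := oneRoundC v m i with hCdef
    have hCsub : C ⊆ Finset.range m := oneRoundC_subset v m i
    have hCne : C.Nonempty := by
      rw [← Finset.card_pos, oneRoundC_card v m i (le_trans hi' hnm)]; omega
    set p := pickTB (v i) C with hpdef
    obtain ⟨hpC, hpmax⟩ := pickTB_spec (v i) C hCne
    have hpm : p < m := Finset.mem_range.1 (hCsub hpC)
    set a : ℕ → ℝ := fun k => (v i k - rowMin m (v i) + 1) * (if k ∈ C then 1 else 0)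
      with hadef
    have hmin_le : ∀ k, k < m → rowMin m (v i) ≤ v i k := by
      intro k hk
      rw [rowMin, dif_pos ⟨k, Finset.mem_range.2 hk⟩]
      exact Finset.inf'_le _ (Finset.mem_range.2 hk)
    have halt : ∀ k, k < m → k ≠ p → a k < a p := by
      intro k hk hkp
      have hple := hmin_le p hpm
      by_cases hkC : k ∈ C
      · have h1 : v i k ≤ v i p := hpmax k hkC
        have h2 : v i k ≠ v i p := hties i hin k hk p hpm hkp
        have h3 : v i k < v i p := lt_of_le_of_ne h1 h2
        simp only [hadef, if_pos hkC, if_pos (show p ∈ C from hpC), mul_one]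
        linarith
      · simp only [hadef, if_neg hkC, if_pos (show p ∈ C from hpC), mul_zero, mul_one]
        linarith
    set l := nhdsWithin (0:ℝ) (Set.Ioi 0) with hldef
    have hz : ∀ k, k < m → Tendsto
        (fun τ : ℝ => (v i k - rowMin m (v i) + 1) * (srState τ v m i).2 k) l (nhds (a k)) := by
      intro k hk
      exact (ih hi' k hk).const_mul _
    have hinv : Tendsto (fun τ : ℝ => τ⁻¹) l atTop := tendsto_inv_nhdsGT_zero
    have hy : ∀ k, k < m → Tendsto
        (fun τ : ℝ => softmaxOn m
          (fun j' => (v i j' - rowMin m (v i) + 1) * (srState τ v m i).2 j' / τ) k)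
        l (nhds (if k = p then 1 else 0)) := by
      intro k hk
      have hrw : ∀ τ : ℝ, softmaxOn m
          (fun j' => (v i j' - rowMin m (v i) + 1) * (srState τ v m i).2 j' / τ) k
          = (∑ k' ∈ Finset.range m, Real.exp
              (((v i k' - rowMin m (v i) + 1) * (srState τ v m i).2 k'
                - (v i k - rowMin m (v i) + 1) * (srState τ v m i).2 k) * τ⁻¹))⁻¹ := by
        intro τ
        rw [softmaxOn_eq_inv]
        congr 1
        refine Finset.sum_congr rfl fun k' _ => ?_
        rw [div_sub_div_same, div_eq_mul_inv]
      simp only [hrw]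
      by_cases hkp : k = p
      · rw [if_pos hkp]
        have hsum : Tendsto (fun τ : ℝ => ∑ k' ∈ Finset.range m, Real.exp
              (((v i k' - rowMin m (v i) + 1) * (srState τ v m i).2 k'
                - (v i k - rowMin m (v i) + 1) * (srState τ v m i).2 k) * τ⁻¹))
            l (nhds (∑ k' ∈ Finset.range m, if k' = k then 1 else 0)) := by
          refine tendsto_finset_sum _ fun k' hk' => ?_
          rw [Finset.mem_range] at hk'
          by_cases h' : k' = k
          · subst h'
            simp only [sub_self, zero_mul, Real.exp_zero, if_pos rfl]
            exact tendsto_const_nhds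
          · rw [if_neg h']
            have hd : Tendsto (fun τ : ℝ =>
                (v i k' - rowMin m (v i) + 1) * (srState τ v m i).2 k'
                - (v i k - rowMin m (v i) + 1) * (srState τ v m i).2 k)
                l (nhds (a k' - a k)) := (hz k' hk').sub (hz k hk)
            have hneg : a k' - a k < 0 := sub_neg.2 (by
              rw [hkp]
              exact halt k' hk' fun h => h' (h.trans hkp.symm))
            exact Real.tendsto_exp_atBot.comp (hd.neg_mul_atTop hneg hinv)
        have h1 : (∑ k' ∈ Finset.range m, if k' = k then (1:ℝ) else 0) = 1 := by
          rw [Finset.sum_ite_eq' (Finset.range m) k fun _ => (1:ℝ)]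
          simp [hk]
        rw [h1] at hsum
        simpa using hsum.inv₀ one_ne_zero
      · rw [if_neg hkp]
        have hd : Tendsto (fun τ : ℝ =>
            (v i p - rowMin m (v i) + 1) * (srState τ v m i).2 p
            - (v i k - rowMin m (v i) + 1) * (srState τ v m i).2 k)
            l (nhds (a p - a k)) := (hz p hpm).sub (hz k hk)
        have hpos : 0 < a p - a k := sub_pos.2 (halt k hk hkp)
        have hterm : Tendsto (fun τ : ℝ => Real.exp
            (((v i p - rowMin m (v i) + 1) * (srState τ v m i).2 p
              - (v i k - rowMin m (v i) + 1) * (srState τ v m i).2 k) * τ⁻¹))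
            l atTop := Real.tendsto_exp_atTop.comp (hd.pos_mul_atTop hpos hinv)
        have hsum : Tendsto (fun τ : ℝ => ∑ k' ∈ Finset.range m, Real.exp
              (((v i k' - rowMin m (v i) + 1) * (srState τ v m i).2 k'
                - (v i k - rowMin m (v i) + 1) * (srState τ v m i).2 k) * τ⁻¹))
            l atTop :=
          tendsto_atTop_mono (fun τ =>
            Finset.single_le_sum (fun k' _ => (Real.exp_pos _).le) (Finset.mem_range.2 hpm))
            hterm
        exact hsum.inv_tendsto_atTop
    have hfin : Tendsto (fun τ : ℝ =>
        (1 - softmaxOn m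
          (fun j' => (v i j' - rowMin m (v i) + 1) * (srState τ v m i).2 j' / τ) j)
        * (srState τ v m i).2 j) l
        (nhds ((1 - if j = p then 1 else 0) * (if j ∈ C then 1 else 0))) :=
      (tendsto_const_nhds.sub (hy j hj)).mul (ih hi' j hj)
    have hind : ((1 - if j = p then (1:ℝ) else 0) * (if j ∈ C then 1 else 0))
        = (if j ∈ oneRoundC v m (i+1) then (1:ℝ) else 0) := by
      show _ = (if j ∈ C.erase p then (1:ℝ) else 0)
      by_cases hjp : j = p
      · subst hjp
        simp [Finset.mem_erase, hpC]
      · by_cases hjC : j ∈ C <;> simp [Finset.mem_erase, hjp, hjC]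
    rw [← hind]
    exact hfin
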